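/- arXiv:2503.18656 — 3 statements merged into one kernel-verified Lean document; each statement's English description precedes it below -/
import Mathlib

section
/- Let s ≥ 0. For any f, g ∈ B^s(ℝ^d), the pointwise product fg belongs to B^s(ℝ^d) and ‖fg‖_{B^s(ℝ^d)} ≤ ‖f‖_{B^s(ℝ^d)} ‖g‖_{B^s(ℝ^d)}. -/
/-! With the normalisation `f x = ∫ F ξ e^{i⟪x, ξ⟫} dξ`, the representative of `f g` is the
convolution `F ⋆ G`: since `e^{i⟪x, η⟫} e^{i⟪x, ξ - η⟫} = e^{i⟪x, ξ⟫}`, Fubini turns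
`(∫ F e^{i⟪x, ·⟫}) (∫ G e^{i⟪x, ·⟫})` into `∫ (F ⋆ G) e^{i⟪x, ·⟫}`. For `s ≥ 0` the weight
`(1 + ‖ξ‖)^s` is submultiplicative, `(1 + ‖ξ‖)^s ≤ (1 + ‖η‖)^s (1 + ‖ξ - η‖)^s`, and for any
submultiplicative weight `w` the pointwise bound `‖(F ⋆ G) ξ‖ w ξ ≤ ((‖F‖ w) ⋆ (‖G‖ w)) ξ`
integrates to `‖F ⋆ G‖_w ≤ ‖F‖_w ‖G‖_w`. -/

open MeasureTheory Complex Filter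

noncomputable section

/-- Euclidean space `ℝ^d`. -/
abbrev Ed (d : ℕ) := EuclideanSpace ℝ (Fin d)

/-- The spectral Barron norm of a Fourier representative `F`. -/
def barronNorm (d : ℕ) (s : ℝ) (F : Ed d → ℂ) : ℝ :=
  ∫ ξ, ‖F ξ‖ * (1 + ‖ξ‖) ^ s

/-- `F` is an (L¹) Fourier representative of `f` with finite spectral Barron norm of order `s`,
i.e. `f` lies in the spectral Barron space `B^s(ℝ^d)` with Fourier transform `F`. -/
structure BarronRep (d : ℕ) (s : ℝ) (f : Ed d → ℝ) (F : Ed d → ℂ) : Prop where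
  intF : Integrable F
  intW : Integrable fun ξ => ‖F ξ‖ * (1 + ‖ξ‖) ^ s
  repr : ∀ x : Ed d, (f x : ℂ) = ∫ ξ, F ξ * Complex.exp (Complex.I * Complex.ofReal (inner ℝ x ξ))

/-- Membership in the spectral Barron space `B^s(ℝ^d)`. -/
def MemBarron (d : ℕ) (s : ℝ) (f : Ed d → ℝ) : Prop := ∃ F, BarronRep d s f F

/-- Partial derivative in the `i`-th coordinate direction. -/
def pd (d : ℕ) (f : Ed d → ℝ) (i : Fin d) (x : Ed d) : ℝ :=
  fderiv ℝ f x (EuclideanSpace.single i 1)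

/-- The Laplacian. -/
def lap (d : ℕ) (V : Ed d → ℝ) (x : Ed d) : ℝ :=
  ∑ i : Fin d, iteratedFDeriv ℝ 2 V x ![EuclideanSpace.single i 1, EuclideanSpace.single i 1]

/-- Squared Sobolev `H^k(K)` norm (derivatives measured with iterated Fréchet derivatives). -/
def sobNormSq (d k : ℕ) (K : Set (Ed d)) (f : Ed d → ℝ) : ℝ :=
  ∑ m ∈ Finset.range (k + 1), ∫ x in K, ‖iteratedFDeriv ℝ m f x‖ ^ 2

/-- A cosine-activated two-layer neural network with `n` hidden neurons. -/
def twoLayerCos (d n : ℕ) (a : Fin n → ℝ) (w : Fin n → Ed d) (b : Fin n → ℝ) (x : Ed d) : ℝ :=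
  (1 / (n : ℝ)) * ∑ j, a j * Real.cos (inner ℝ (w j) x + b j)

open scoped Convolution InnerProductSpace
open ContinuousLinearMap (mul)

theorem one_add_norm_rpow_le_mul {E : Type*} [SeminormedAddCommGroup E] {s : ℝ} (hs : 0 ≤ s)
    (ξ η : E) : (1 + ‖ξ‖) ^ s ≤ (1 + ‖η‖) ^ s * (1 + ‖ξ - η‖) ^ s := by
  rw [← Real.mul_rpow (by positivity) (by positivity)]
  gcongr
  have := norm_le_insert' ξ η
  nlinarith [norm_nonneg η, norm_nonneg (ξ - η)]

section WeightedConvolution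

variable {E 𝕜 : Type*} [RCLike 𝕜] [AddGroup E] [MeasurableSpace E] [MeasurableAdd₂ E]
  [MeasurableNeg E] {μ : Measure E} [SFinite μ] [μ.IsAddRightInvariant] {w : E → ℝ}
  {F G : E → 𝕜}

theorem ae_norm_convolution_mul_le_of_submultiplicative (hw₀ : ∀ ξ, 0 ≤ w ξ)
    (hw : ∀ ξ η, w ξ ≤ w η * w (ξ - η)) (hFw : Integrable (fun ξ => ‖F ξ‖ * w ξ) μ)
    (hGw : Integrable (fun ξ => ‖G ξ‖ * w ξ) μ) :
    ∀ᵐ ξ ∂μ, ‖(F ⋆[mul 𝕜 𝕜, μ] G) ξ‖ * w ξ ≤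
      ((fun η => ‖F η‖ * w η) ⋆[mul ℝ ℝ, μ] fun η => ‖G η‖ * w η) ξ := by
  filter_upwards [hFw.ae_convolution_exists (mul ℝ ℝ) hGw] with ξ hξ
  calc ‖(F ⋆[mul 𝕜 𝕜, μ] G) ξ‖ * w ξ
      ≤ (∫ η, ‖F η‖ * ‖G (ξ - η)‖ ∂μ) * w ξ := by
        gcongr
        · exact hw₀ ξ
        · simpa only [convolution_mul, norm_mul] using
            norm_integral_le_integral_norm (μ := μ) fun η => F η * G (ξ - η)
    _ = ∫ η, ‖F η‖ * ‖G (ξ - η)‖ * w ξ ∂μ := (integral_mul_const _ _).symm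
    _ ≤ ∫ η, ‖F η‖ * w η * (‖G (ξ - η)‖ * w (ξ - η)) ∂μ := by
        refine integral_mono_of_nonneg (ae_of_all _ fun η => by have := hw₀ ξ; positivity)
          hξ.integrable (ae_of_all _ fun η => ?_)
        calc ‖F η‖ * ‖G (ξ - η)‖ * w ξ ≤ ‖F η‖ * ‖G (ξ - η)‖ * (w η * w (ξ - η)) := by
              gcongr; exact hw ξ η
          _ = _ := by ring
    _ = _ := (convolution_mul (f := fun η => ‖F η‖ * w η) (g := fun η => ‖G η‖ * w η)).symm

theorem integrable_norm_convolution_mul_of_submultiplicative (hw₀ : ∀ ξ, 0 ≤ w ξ)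
    (hw : ∀ ξ η, w ξ ≤ w η * w (ξ - η)) (hw_meas : AEStronglyMeasurable w μ)
    (hF : Integrable F μ) (hG : Integrable G μ) (hFw : Integrable (fun ξ => ‖F ξ‖ * w ξ) μ)
    (hGw : Integrable (fun ξ => ‖G ξ‖ * w ξ) μ) :
    Integrable (fun ξ => ‖(F ⋆[mul 𝕜 𝕜, μ] G) ξ‖ * w ξ) μ := by
  refine (hFw.integrable_convolution (mul ℝ ℝ) hGw).mono'
    ((hF.integrable_convolution _ hG).aestronglyMeasurable.norm.mul hw_meas) ?_
  filter_upwards [ae_norm_convolution_mul_le_of_submultiplicative hw₀ hw hFw hGw] with ξ hξ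
  rwa [Real.norm_of_nonneg (mul_nonneg (norm_nonneg _) (hw₀ ξ))]

theorem integral_norm_convolution_mul_le_of_submultiplicative (hw₀ : ∀ ξ, 0 ≤ w ξ)
    (hw : ∀ ξ η, w ξ ≤ w η * w (ξ - η)) (hFw : Integrable (fun ξ => ‖F ξ‖ * w ξ) μ)
    (hGw : Integrable (fun ξ => ‖G ξ‖ * w ξ) μ) :
    ∫ ξ, ‖(F ⋆[mul 𝕜 𝕜, μ] G) ξ‖ * w ξ ∂μ ≤
      (∫ ξ, ‖F ξ‖ * w ξ ∂μ) * ∫ ξ, ‖G ξ‖ * w ξ ∂μ :=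
  (integral_mono_of_nonneg (ae_of_all _ fun ξ => mul_nonneg (norm_nonneg _) (hw₀ ξ))
    (hFw.integrable_convolution (mul ℝ ℝ) hGw)
    (ae_norm_convolution_mul_le_of_submultiplicative hw₀ hw hFw hGw)).trans_eq
    (integral_convolution (mul ℝ ℝ) hFw hGw)

end WeightedConvolution

section Characters

variable {E 𝕜 : Type*} [RCLike 𝕜] [AddCommGroup E] [MeasurableSpace E] {μ : Measure E}
  {c F G : E → 𝕜}

theorem convolution_mul_char_eq (hc : ∀ a b, c (a + b) = c a * c b) (ξ : E) :
    ((fun η => F η * c η) ⋆[mul 𝕜 𝕜, μ] fun η => G η * c η) ξ = (F ⋆[mul 𝕜 𝕜, μ] G) ξ * c ξ := by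
  simp only [convolution_mul, ← integral_mul_const]
  congr 1 with η
  rw [show c ξ = c η * c (ξ - η) by rw [← hc, add_sub_cancel]]
  ring

theorem integral_mul_char_mul_integral_mul_char [MeasurableAdd₂ E] [MeasurableNeg E] [SFinite μ]
    [μ.IsAddRightInvariant] (hc : ∀ a b, c (a + b) = c a * c b)
    (hc_meas : AEStronglyMeasurable c μ) (hc_le : ∀ ξ, ‖c ξ‖ ≤ 1)
    (hF : Integrable F μ) (hG : Integrable G μ) :
    (∫ ξ, F ξ * c ξ ∂μ) * ∫ ξ, G ξ * c ξ ∂μ = ∫ ξ, (F ⋆[mul 𝕜 𝕜, μ] G) ξ * c ξ ∂μ := by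
  have hFc := hF.mul_bdd hc_meas (ae_of_all _ hc_le)
  have hGc := hG.mul_bdd hc_meas (ae_of_all _ hc_le)
  simp only [← convolution_mul_char_eq hc]
  exact (integral_convolution (mul 𝕜 𝕜) hFc hGc).symm

end Characters

theorem exp_I_mul_inner_add {V : Type*} [NormedAddCommGroup V] [InnerProductSpace ℝ V]
    (x a b : V) :
    exp (I * (⟪x, a + b⟫_ℝ : ℂ)) = exp (I * (⟪x, a⟫_ℝ : ℂ)) * exp (I * (⟪x, b⟫_ℝ : ℂ)) := by
  rw [← exp_add, inner_add_right]
  push_cast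
  ring_nf

theorem BarronRep.convolution {d : ℕ} {s : ℝ} (hs : 0 ≤ s) {f g : Ed d → ℝ} {F G : Ed d → ℂ}
    (hF : BarronRep d s f F) (hG : BarronRep d s g G) :
    BarronRep d s (fun x => f x * g x) (F ⋆[mul ℂ ℂ, volume] G) where
  intF := hF.intF.integrable_convolution _ hG.intF
  intW := integrable_norm_convolution_mul_of_submultiplicative (fun _ => by positivity)
    (one_add_norm_rpow_le_mul hs) (by fun_prop) hF.intF hG.intF hF.intW hG.intW
  repr x := by
    push_cast
    rw [hF.repr, hG.repr]
    exact integral_mul_char_mul_integral_mul_char (exp_I_mul_inner_add x)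
      (by fun_prop) (fun _ => (norm_exp_I_mul_ofReal _).le) hF.intF hG.intF

theorem barronNorm_convolution_le {d : ℕ} {s : ℝ} (hs : 0 ≤ s) {f g : Ed d → ℝ}
    {F G : Ed d → ℂ} (hF : BarronRep d s f F) (hG : BarronRep d s g G) :
    barronNorm d s (F ⋆[mul ℂ ℂ, volume] G) ≤ barronNorm d s F * barronNorm d s G :=
  integral_norm_convolution_mul_le_of_submultiplicative (fun _ => by positivity)
    (one_add_norm_rpow_le_mul hs) hF.intW hG.intW

/-- for `s ≥ 0`, the spectral Barron space `B^s(ℝ^d)` is closed under pointwise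
products, with `‖fg‖_{B^s} ≤ ‖f‖_{B^s} ‖g‖_{B^s}`. -/
theorem barron_mul (d : ℕ) (s : ℝ) (hs : 0 ≤ s) (f g : Ed d → ℝ) (F G : Ed d → ℂ)
    (hF : BarronRep d s f F) (hG : BarronRep d s g G) :
    ∃ H : Ed d → ℂ, BarronRep d s (fun x => f x * g x) H ∧
      barronNorm d s H ≤ barronNorm d s F * barronNorm d s G :=
  ⟨_, hF.convolution hs hG, barronNorm_convolution_le hs hF hG⟩

end
end

section
/- Let s ≥ 0 and γ > 0. For every f ∈ B^s(ℝ^d), the function (γI − Δ)^{−1} f defined on the Fourier side by ((γI−Δ)^{−1}f)^(ξ) = f̂(ξ)/(γ + |ξ|²) satisfies the three bounds: ‖(γI−Δ)^{−1} f‖_{B^s(ℝ^d)} ≤ γ^{−1} ‖f‖_{B^s(ℝ^d)}, ‖(γI−Δ)^{−1} f‖_{B^{s+1}(ℝ^d)} ≤ (1/(2(√(1+γ) − 1))) ‖f‖_{B^s(ℝ^d)}, and ‖(γI−Δ)^{−1} f‖_{B^{s+2}(ℝ^d)} ≤ (1 + 1/γ) ‖f‖_{B^s(ℝ^d)}. 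-/
open MeasureTheory Complex Filter

noncomputable section

/-!
The resolvent is the Fourier multiplier `(γ + |ξ|²)⁻¹`, and a multiplier `m` with
`|m ξ| (1 + |ξ|)^t ≤ c` maps `B^s` into `B^(s+t)` with norm at most `c`. So each bound reduces to
a scalar inequality `(1 + r)^n ≤ c (γ + r²)` for `n = 0, 1, 2`, whose two sides differ by a
square divided by a positive constant.
-/

theorem integrable_and_integral_le_const_mul {α : Type*} [MeasurableSpace α] {μ : Measure α}
    {f g : α → ℝ} {c : ℝ} (hf : AEStronglyMeasurable f μ) (hg : Integrable g μ)
    (hf0 : ∀ x, 0 ≤ f x) (hfg : ∀ x, f x ≤ c * g x) :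
    Integrable f μ ∧ ∫ x, f x ∂μ ≤ c * ∫ x, g x ∂μ := by
  have hint : Integrable f μ :=
    (hg.const_mul c).mono' hf (.of_forall fun x => by rw [Real.norm_of_nonneg (hf0 x)]; exact hfg x)
  refine ⟨hint, ?_⟩
  rw [← integral_const_mul]
  exact integral_mono hint (hg.const_mul c) hfg

theorem barronNorm_mul_le {d : ℕ} {s t c : ℝ} {F m : Ed d → ℂ}
    (hF : AEStronglyMeasurable F) (hFw : Integrable fun ξ => ‖F ξ‖ * (1 + ‖ξ‖) ^ s)
    (hm : AEStronglyMeasurable m) (hmc : ∀ ξ, ‖m ξ‖ * (1 + ‖ξ‖) ^ t ≤ c) :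
    (Integrable fun ξ => ‖(F * m) ξ‖ * (1 + ‖ξ‖) ^ (s + t)) ∧
      barronNorm d (s + t) (F * m) ≤ c * barronNorm d s F := by
  have hpos : ∀ ξ : Ed d, 0 < 1 + ‖ξ‖ := fun ξ => by positivity
  refine integrable_and_integral_le_const_mul ?_ hFw (fun ξ => by positivity) fun ξ => ?_
  · exact (hF.mul hm).norm.mul
      ((continuous_const.add continuous_norm).rpow_const fun ξ => .inl (hpos ξ).ne').aestronglyMeasurable
  · calc ‖(F * m) ξ‖ * (1 + ‖ξ‖) ^ (s + t)
        = ‖F ξ‖ * (1 + ‖ξ‖) ^ s * (‖m ξ‖ * (1 + ‖ξ‖) ^ t) := by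
          rw [Pi.mul_apply, norm_mul, Real.rpow_add (hpos ξ)]; ring
      _ ≤ ‖F ξ‖ * (1 + ‖ξ‖) ^ s * c := by gcongr; exact hmc ξ
      _ = c * (‖F ξ‖ * (1 + ‖ξ‖) ^ s) := mul_comm _ _

theorem resolvent_barronNorm_le {d : ℕ} {s γ c : ℝ} (n : ℕ) (hγ : 0 < γ) {F G : Ed d → ℂ}
    (hF : AEStronglyMeasurable F) (hFw : Integrable fun ξ => ‖F ξ‖ * (1 + ‖ξ‖) ^ s)
    (hG : ∀ ξ, G ξ = F ξ / ((γ + ‖ξ‖ ^ 2 : ℝ) : ℂ))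
    (hc : ∀ r : ℝ, 0 ≤ r → (1 + r) ^ n ≤ c * (γ + r ^ 2)) :
    (Integrable fun ξ => ‖G ξ‖ * (1 + ‖ξ‖) ^ (s + n)) ∧
      barronNorm d (s + n) G ≤ c * barronNorm d s F := by
  set m : Ed d → ℂ := fun ξ => ((γ + ‖ξ‖ ^ 2 : ℝ) : ℂ)⁻¹
  have hden : ∀ ξ : Ed d, 0 < γ + ‖ξ‖ ^ 2 := fun ξ => by positivity
  have hGm : G = F * m := funext fun ξ => by rw [hG, div_eq_mul_inv]; rfl
  have hm : Continuous m :=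
    (continuous_ofReal.comp (by fun_prop)).inv₀ fun ξ => ofReal_ne_zero.mpr (hden ξ).ne'
  subst hGm
  refine barronNorm_mul_le hF hFw hm.aestronglyMeasurable fun ξ => ?_
  rw [norm_inv, norm_real, Real.norm_of_nonneg (hden ξ).le, Real.rpow_natCast,
    inv_mul_le_iff₀ (hden ξ), mul_comm]
  exact hc ‖ξ‖ (norm_nonneg ξ)

theorem one_le_inv_mul_add_sq {γ : ℝ} (hγ : 0 < γ) (r : ℝ) : 1 ≤ γ⁻¹ * (γ + r ^ 2) := by
  rw [inv_mul_eq_div, le_div_iff₀ hγ]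
  nlinarith [sq_nonneg r]

/-- With `a = √(1 + γ) - 1`, so that `a² + 2a = γ`, the difference of the two sides is
`(r - a)² / (2a)`. -/
theorem one_add_le_mul_add_sq {γ : ℝ} (hγ : 0 < γ) (r : ℝ) :
    1 + r ≤ 1 / (2 * (Real.sqrt (1 + γ) - 1)) * (γ + r ^ 2) := by
  have hsq : Real.sqrt (1 + γ) ^ 2 = 1 + γ := Real.sq_sqrt (by linarith)
  have ha : 0 < Real.sqrt (1 + γ) - 1 := by
    rw [sub_pos, Real.lt_sqrt zero_le_one]; linarith
  rw [one_div, inv_mul_eq_div, le_div_iff₀ (by positivity)]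
  nlinarith [sq_nonneg (r - (Real.sqrt (1 + γ) - 1))]

theorem one_add_sq_le_mul_add_sq {γ : ℝ} (hγ : 0 < γ) (r : ℝ) :
    (1 + r) ^ 2 ≤ (1 + 1 / γ) * (γ + r ^ 2) := by
  have key : (1 + 1 / γ) * (γ + r ^ 2) - (1 + r) ^ 2 = (γ - r) ^ 2 / γ := by
    field_simp; ring
  have : 0 ≤ (γ - r) ^ 2 / γ := by positivity
  linarith

theorem resolvent_bounds_general (d : ℕ) (s γ : ℝ) (hγ : 0 < γ)
    (f : Ed d → ℝ) (F : Ed d → ℂ) (hF : BarronRep d s f F)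
    (G : Ed d → ℂ) (hG : ∀ ξ, G ξ = F ξ / ((γ + ‖ξ‖ ^ 2 : ℝ) : ℂ)) :
    (Integrable fun ξ => ‖G ξ‖ * (1 + ‖ξ‖) ^ s) ∧
    (Integrable fun ξ => ‖G ξ‖ * (1 + ‖ξ‖) ^ (s + 1)) ∧
    (Integrable fun ξ => ‖G ξ‖ * (1 + ‖ξ‖) ^ (s + 2)) ∧
    barronNorm d s G ≤ γ⁻¹ * barronNorm d s F ∧
    barronNorm d (s + 1) G ≤ (1 / (2 * (Real.sqrt (1 + γ) - 1))) * barronNorm d s F ∧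
    barronNorm d (s + 2) G ≤ (1 + 1 / γ) * barronNorm d s F := by
  have bound := fun n (c : ℝ) =>
    resolvent_barronNorm_le (s := s) (c := c) n hγ hF.intF.aestronglyMeasurable hF.intW hG
  obtain ⟨int0, le0⟩ := bound 0 γ⁻¹ fun r _ => by simpa using one_le_inv_mul_add_sq hγ r
  obtain ⟨int1, le1⟩ := bound 1 (1 / (2 * (Real.sqrt (1 + γ) - 1))) fun r _ => by
    simpa using one_add_le_mul_add_sq hγ r
  obtain ⟨int2, le2⟩ := bound 2 (1 + 1 / γ) fun r _ => one_add_sq_le_mul_add_sq hγ r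
  simp only [Nat.cast_zero, add_zero, Nat.cast_one, Nat.cast_ofNat] at int0 le0 int1 le1 int2 le2
  exact ⟨int0, int1, int2, le0, le1, le2⟩

/-- bounds for the resolvent `(γI - Δ)⁻¹` (division of the Fourier transform by
`γ + |ξ|²`) in spectral Barron norms of orders `s`, `s+1` and `s+2`. -/
theorem resolvent_bounds (d : ℕ) (s γ : ℝ) (hs : 0 ≤ s) (hγ : 0 < γ)
    (f : Ed d → ℝ) (F : Ed d → ℂ) (hF : BarronRep d s f F)
    (G : Ed d → ℂ) (hG : ∀ ξ, G ξ = F ξ / ((γ + ‖ξ‖ ^ 2 : ℝ) : ℂ)) :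
    (Integrable fun ξ => ‖G ξ‖ * (1 + ‖ξ‖) ^ s) ∧
    (Integrable fun ξ => ‖G ξ‖ * (1 + ‖ξ‖) ^ (s + 1)) ∧
    (Integrable fun ξ => ‖G ξ‖ * (1 + ‖ξ‖) ^ (s + 2)) ∧
    barronNorm d s G ≤ γ⁻¹ * barronNorm d s F ∧
    barronNorm d (s + 1) G ≤ (1 / (2 * (Real.sqrt (1 + γ) - 1))) * barronNorm d s F ∧
    barronNorm d (s + 2) G ≤ (1 + 1 / γ) * barronNorm d s F :=
  resolvent_bounds_general d s γ hγ f F hF G hG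
end
end

section
/- Let s ≥ 0, let R ∈ ℝ^{m×m} be symmetric positive definite, let g : ℝ^d → ℝ^{d×m} have all entries in B^s(ℝ^d), and let V ∈ B^{s+1}(ℝ^d). Define u : ℝ^d → ℝ^m by u(x) := −(1/2) R^{−1} g(x)^T ∇V(x). Then every component of u belongs to B^s(ℝ^d) and ‖u‖_{B^s(ℝ^d)} ≤ C_{R,2} ‖g‖_{B^s(ℝ^d)} ‖V‖_{B^{s+1}(ℝ^d)}, where C_{R,2} := (1/2) Σ_{i=1}^m max_{1≤j≤m} |(R^{−1})_{ij}|. -/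
open MeasureTheory Complex Filter

noncomputable section

/-!
On the Fourier side a product becomes a convolution and `∂ₖ` becomes multiplication by `i ξₖ`.
For `s ≥ 0` the weight `(1 + |ξ|)^s` is submultiplicative, `(1 + |ξ|)^s ≤ (1 + |η|)^s (1 + |ξ - η|)^s`,
so `‖f h‖_{B^s} ≤ ‖f‖_{B^s} ‖h‖_{B^s}`, while `|ξₖ| (1 + |ξ|)^s ≤ (1 + |ξ|)^{s+1}` gives
`‖∂ₖ V‖_{B^s} ≤ ‖V‖_{B^{s+1}}`. Each component of `u` is a linear combination of the products
`g k j ∂ₖ V` with coefficients `-(1/2) (R⁻¹)ᵢⱼ`, and the triangle inequality with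
`|(R⁻¹)ᵢⱼ| ≤ maxⱼ |(R⁻¹)ᵢⱼ|` finishes the estimate.
-/

open MeasureTheory Complex Filter FourierTransform ContinuousLinearMap
open scoped Convolution Real InnerProductSpace

section Weight

variable {E : Type*} [SeminormedAddCommGroup E] {s : ℝ}

lemma one_add_norm_rpow_le_mul_sub (hs : 0 ≤ s) (ξ η : E) :
    (1 + ‖ξ‖) ^ s ≤ (1 + ‖η‖) ^ s * (1 + ‖ξ - η‖) ^ s := by
  rw [← Real.mul_rpow (by positivity) (by positivity)]
  have := norm_le_norm_add_norm_sub' ξ η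
  gcongr
  nlinarith [norm_nonneg η, norm_nonneg (ξ - η)]

lemma norm_mul_one_add_norm_rpow_le (s : ℝ) (ξ : E) :
    ‖ξ‖ * (1 + ‖ξ‖) ^ s ≤ (1 + ‖ξ‖) ^ (s + 1) := by
  rw [Real.rpow_add_one (by positivity), mul_comm]
  gcongr
  linarith

lemma norm_le_one_add_norm_rpow (hs : 0 ≤ s) (ξ : E) : ‖ξ‖ ≤ (1 + ‖ξ‖) ^ (s + 1) :=
  (le_mul_of_one_le_right (norm_nonneg ξ) (Real.one_le_rpow (by simp) hs)).trans
    (norm_mul_one_add_norm_rpow_le s ξ)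

def barronIntegrand (s : ℝ) (F : E → ℂ) (ξ : E) : ℝ := ‖F ξ‖ * (1 + ‖ξ‖) ^ s

lemma barronIntegrand_nonneg (s : ℝ) (F : E → ℂ) (ξ : E) : 0 ≤ barronIntegrand s F ξ := by
  unfold barronIntegrand; positivity

lemma norm_le_barronIntegrand (hs : 0 ≤ s) (F : E → ℂ) (ξ : E) : ‖F ξ‖ ≤ barronIntegrand s F ξ :=
  le_mul_of_one_le_right (norm_nonneg _) (Real.one_le_rpow (by simp) hs)

lemma integrable_barronIntegrand_of_le [MeasurableSpace E] [OpensMeasurableSpace E] {μ : Measure E}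
    {F : E → ℂ} {b : E → ℝ} (hF : AEStronglyMeasurable F μ) (hb : Integrable b μ)
    (hle : ∀ᵐ ξ ∂μ, barronIntegrand s F ξ ≤ b ξ) : Integrable (barronIntegrand s F) μ := by
  refine hb.mono' (hF.norm.mul ?_) ?_
  · exact ((continuous_const.add continuous_norm).rpow_const
      fun ξ => Or.inl (add_pos_of_pos_of_nonneg one_pos (norm_nonneg ξ)).ne').aestronglyMeasurable
  · filter_upwards [hle] with ξ hξ
    rwa [Real.norm_of_nonneg (barronIntegrand_nonneg s F ξ)]

lemma barronIntegrand_sum_le {ι : Type*} (t : Finset ι) (F : ι → E → ℂ) (ξ : E) :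
    barronIntegrand s (fun ξ => ∑ i ∈ t, F i ξ) ξ ≤ ∑ i ∈ t, barronIntegrand s (F i) ξ := by
  simp only [barronIntegrand, ← Finset.sum_mul]
  gcongr
  exact norm_sum_le _ _

lemma integrable_barronIntegrand_const_mul [MeasurableSpace E] {μ : Measure E} {F : E → ℂ}
    (hF : Integrable (barronIntegrand s F) μ) (c : ℂ) :
    Integrable (barronIntegrand s fun ξ => c * F ξ) μ := by
  refine (hF.const_mul ‖c‖).congr (ae_of_all _ fun ξ => ?_)
  simp only [barronIntegrand, norm_mul, mul_assoc]

end Weight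

section RealPart

variable {E : Type*} [NormedAddCommGroup E] [NormedSpace ℝ E]

lemma ofReal_fderiv_apply_of_hasFDerivAt {f : E → ℝ} {L : E →L[ℝ] ℂ} {x : E}
    (hf : HasFDerivAt (fun y => (f y : ℂ)) L x) (v : E) : (fderiv ℝ f x v : ℂ) = L v := by
  have hre : HasFDerivAt f (reCLM.comp L) x := by
    simpa [Function.comp_def] using reCLM.hasFDerivAt.comp x hf
  have hL : L = ofRealCLM.comp (reCLM.comp L) :=
    hf.unique (by simpa [Function.comp_def] using ofRealCLM.hasFDerivAt.comp x hre)
  rw [hre.fderiv]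
  conv_rhs => rw [hL]
  rfl

end RealPart

section Fourier

variable {V : Type*} [NormedAddCommGroup V] [InnerProductSpace ℝ V]

lemma fourierChar_smul_eq_mul_cexp_inner (F : V → ℂ) (x ξ : V) :
    𝐞 (-⟪ξ, -(2 * π)⁻¹ • x⟫_ℝ) • F ξ = F ξ * cexp (I * ⟪x, ξ⟫_ℝ) := by
  rw [Circle.smul_def, Real.fourierChar_apply, inner_smul_right, real_inner_comm ξ x, smul_eq_mul]
  push_cast
  field_simp

variable [FiniteDimensional ℝ V] [MeasurableSpace V] [BorelSpace V] {s : ℝ}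

/-- The frequency convention `e^{i⟪x, ξ⟫}` of `BarronRep` against Mathlib's
`𝓕 F w = ∫ e^{-2πi⟪ξ, w⟫} F ξ`. -/
lemma integral_mul_cexp_inner_eq_fourier (F : V → ℂ) (x : V) :
    ∫ ξ, F ξ * cexp (I * ⟪x, ξ⟫_ℝ) = 𝓕 F (-(2 * π)⁻¹ • x) := by
  simp only [Real.fourier_eq, fourierChar_smul_eq_mul_cexp_inner]

lemma integrable_mul_cexp_inner {F : V → ℂ} (hF : Integrable F) (x : V) :
    Integrable fun ξ => F ξ * cexp (I * ⟪x, ξ⟫_ℝ) := by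
  simpa only [fourierChar_smul_eq_mul_cexp_inner] using
    (Real.fourierIntegral_convergent_iff (-(2 * π)⁻¹ • x)).2 hF

lemma ae_barronIntegrand_convolution_le (hs : 0 ≤ s) {F H : V → ℂ}
    (hF : Integrable (barronIntegrand s F)) (hH : Integrable (barronIntegrand s H)) :
    ∀ᵐ ξ, barronIntegrand s (F ⋆[mul ℂ ℂ] H) ξ ≤
      (barronIntegrand s F ⋆[mul ℝ ℝ] barronIntegrand s H) ξ := by
  filter_upwards [hF.ae_convolution_exists (mul ℝ ℝ) hH] with ξ hex
  calc ‖(F ⋆[mul ℂ ℂ] H) ξ‖ * (1 + ‖ξ‖) ^ s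
      ≤ (∫ η, ‖F η‖ * ‖H (ξ - η)‖) * (1 + ‖ξ‖) ^ s := by
        gcongr
        rw [convolution_mul]
        exact (norm_integral_le_integral_norm fun η => F η * H (ξ - η)).trans_eq
          (by simp only [norm_mul])
    _ = ∫ η, ‖F η‖ * ‖H (ξ - η)‖ * (1 + ‖ξ‖) ^ s := (integral_mul_const _ _).symm
    _ ≤ ∫ η, barronIntegrand s F η * barronIntegrand s H (ξ - η) := by
        refine integral_mono_of_nonneg (ae_of_all _ fun η => by positivity) hex
          (ae_of_all _ fun η => ?_)
        have := one_add_norm_rpow_le_mul_sub hs ξ η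
        simp only [barronIntegrand]
        calc ‖F η‖ * ‖H (ξ - η)‖ * (1 + ‖ξ‖) ^ s
            ≤ ‖F η‖ * ‖H (ξ - η)‖ * ((1 + ‖η‖) ^ s * (1 + ‖ξ - η‖) ^ s) := by gcongr
          _ = _ := by ring

lemma integrable_barronIntegrand_convolution (hs : 0 ≤ s) {F H : V → ℂ}
    (hF : Integrable F) (hFw : Integrable (barronIntegrand s F))
    (hH : Integrable H) (hHw : Integrable (barronIntegrand s H)) :
    Integrable (barronIntegrand s (F ⋆[mul ℂ ℂ] H)) :=
  integrable_barronIntegrand_of_le (hF.integrable_convolution _ hH).aestronglyMeasurable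
    (hFw.integrable_convolution _ hHw) (ae_barronIntegrand_convolution_le hs hFw hHw)

lemma integral_barronIntegrand_convolution_le (hs : 0 ≤ s) {F H : V → ℂ}
    (hF : Integrable (barronIntegrand s F)) (hH : Integrable (barronIntegrand s H)) :
    ∫ ξ, barronIntegrand s (F ⋆[mul ℂ ℂ] H) ξ ≤
      (∫ ξ, barronIntegrand s F ξ) * ∫ ξ, barronIntegrand s H ξ := by
  have hconv := integral_convolution (mul ℝ ℝ) hF hH
  rw [mul_apply'] at hconv
  rw [← hconv]
  exact integral_mono_of_nonneg (ae_of_all _ (barronIntegrand_nonneg s _))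
    (hF.integrable_convolution _ hH) (ae_barronIntegrand_convolution_le hs hF hH)

lemma fderiv_apply_eq_integral_mul_cexp_inner {f : V → ℝ} {F : V → ℂ} (hF : Integrable F)
    (hF' : Integrable fun ξ => ‖ξ‖ * ‖F ξ‖)
    (hf : ∀ x, (f x : ℂ) = ∫ ξ, F ξ * cexp (I * ⟪x, ξ⟫_ℝ)) (x v : V) :
    (fderiv ℝ f x v : ℂ) = ∫ ξ, I * ⟪ξ, v⟫_ℝ * F ξ * cexp (I * ⟪x, ξ⟫_ℝ) := by
  have hfun : (fun y => (f y : ℂ)) = fun y => 𝓕 F ((-(2 * π)⁻¹ : ℝ) • y) := by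
    funext y; rw [hf, integral_mul_cexp_inner_eq_fourier]
  have hD := (Real.hasFDerivAt_fourier hF hF' _).comp x
    ((-(2 * π)⁻¹ : ℝ) • ContinuousLinearMap.id ℝ V).hasFDerivAt
  have hG : Integrable (VectorFourier.fourierSMulRight (innerSL ℝ) F) := by
    refine (hF'.const_mul (2 * π * ‖innerSL ℝ (E := V)‖)).mono'
      hF.aestronglyMeasurable.fourierSMulRight (ae_of_all _ fun ξ => ?_)
    simpa only [mul_assoc] using VectorFourier.norm_fourierSMulRight_le (innerSL ℝ) F ξ
  rw [ofReal_fderiv_apply_of_hasFDerivAt (f := f) (by rw [hfun]; exact hD) v]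
  simp only [comp_apply, smul_apply, id_apply]
  rw [Real.fourier_continuousLinearMap_apply hG, integral_mul_cexp_inner_eq_fourier]
  refine congrArg (fun G : V → ℂ => 𝓕 G _) (funext fun ξ => ?_)
  simp only [VectorFourier.fourierSMulRight_apply, innerSL_apply_apply ℝ, inner_smul_right,
    real_smul, smul_eq_mul]
  push_cast
  field_simp

end Fourier

lemma sum_abs_mul_le_iSup_abs_mul_sum {ι : Type*} [Fintype ι] (a b : ι → ℝ) (hb : ∀ j, 0 ≤ b j) :
    ∑ j, |a j| * b j ≤ (⨆ j, |a j|) * ∑ j, b j := by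
  rw [Finset.mul_sum]
  gcongr with j
  · exact hb j
  · exact le_ciSup (f := fun j => |a j|) (Set.finite_range _).bddAbove j

section Barron

variable {d : ℕ} {s : ℝ}

lemma barronNorm_nonneg (F : Ed d → ℂ) : 0 ≤ barronNorm d s F :=
  integral_nonneg (barronIntegrand_nonneg s F)

lemma barronNorm_const_mul (c : ℂ) (F : Ed d → ℂ) :
    barronNorm d s (fun ξ => c * F ξ) = ‖c‖ * barronNorm d s F := by
  simp only [barronNorm, norm_mul, mul_assoc, integral_const_mul]

lemma barronNorm_sum_le {ι : Type*} (t : Finset ι) {F : ι → Ed d → ℂ}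
    (hF : ∀ i ∈ t, Integrable (barronIntegrand s (F i))) :
    barronNorm d s (fun ξ => ∑ i ∈ t, F i ξ) ≤ ∑ i ∈ t, barronNorm d s (F i) := by
  change ∫ ξ, barronIntegrand s (fun ξ => ∑ i ∈ t, F i ξ) ξ ≤
    ∑ i ∈ t, ∫ ξ, barronIntegrand s (F i) ξ
  rw [← integral_finsetSum t hF]
  exact integral_mono_of_nonneg (ae_of_all _ (barronIntegrand_nonneg s _))
    (integrable_finsetSum t hF) (ae_of_all _ (barronIntegrand_sum_le t F))

lemma barronNorm_sum_mul_le {ι : Type*} (t : Finset ι) (a : ι → ℝ) {F : ι → Ed d → ℂ}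
    (hF : ∀ i ∈ t, Integrable (barronIntegrand s (F i))) :
    barronNorm d s (fun ξ => ∑ i ∈ t, (a i : ℂ) * F i ξ) ≤ ∑ i ∈ t, |a i| * barronNorm d s (F i) :=
  (barronNorm_sum_le t fun i hi => integrable_barronIntegrand_const_mul (hF i hi) _).trans_eq
    (by simp only [barronNorm_const_mul, norm_real, Real.norm_eq_abs])

lemma barronIntegrand_I_mul_coord_le (k : Fin d) (F : Ed d → ℂ) (ξ : Ed d) :
    barronIntegrand s (fun ξ => I * ξ k * F ξ) ξ ≤ barronIntegrand (s + 1) F ξ := by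
  simp only [barronIntegrand, norm_mul, norm_I, one_mul, norm_real]
  calc ‖ξ k‖ * ‖F ξ‖ * (1 + ‖ξ‖) ^ s ≤ ‖ξ‖ * ‖F ξ‖ * (1 + ‖ξ‖) ^ s := by
        gcongr; exact PiLp.norm_apply_le ξ k
    _ = ‖F ξ‖ * (‖ξ‖ * (1 + ‖ξ‖) ^ s) := by ring
    _ ≤ ‖F ξ‖ * (1 + ‖ξ‖) ^ (s + 1) := by gcongr; exact norm_mul_one_add_norm_rpow_le s ξ

lemma barronNorm_I_mul_coord_le {F : Ed d → ℂ} (hF : Integrable (barronIntegrand (s + 1) F))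
    (k : Fin d) : barronNorm d s (fun ξ => I * ξ k * F ξ) ≤ barronNorm d (s + 1) F :=
  integral_mono_of_nonneg (ae_of_all _ (barronIntegrand_nonneg s _)) hF
    (ae_of_all _ (barronIntegrand_I_mul_coord_le k F))

namespace BarronRep

variable {f h : Ed d → ℝ} {F H : Ed d → ℂ}

lemma eq_fourier (hf : BarronRep d s f F) (x : Ed d) : (f x : ℂ) = 𝓕 F (-(2 * π)⁻¹ • x) := by
  rw [hf.repr, integral_mul_cexp_inner_eq_fourier]

lemma const_mul (hf : BarronRep d s f F) (c : ℝ) :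
    BarronRep d s (fun x => c * f x) (fun ξ => c * F ξ) where
  intF := hf.intF.const_mul _
  intW := integrable_barronIntegrand_const_mul hf.intW _
  repr x := by
    push_cast
    rw [hf.repr, ← integral_const_mul]
    simp only [mul_assoc]

lemma sum {ι : Type*} (t : Finset ι) {f : ι → Ed d → ℝ} {F : ι → Ed d → ℂ}
    (hf : ∀ i ∈ t, BarronRep d s (f i) (F i)) :
    BarronRep d s (fun x => ∑ i ∈ t, f i x) (fun ξ => ∑ i ∈ t, F i ξ) where
  intF := integrable_finsetSum t fun i hi => (hf i hi).intF
  intW := integrable_barronIntegrand_of_le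
    (integrable_finsetSum t fun i hi => (hf i hi).intF).aestronglyMeasurable
    (integrable_finsetSum t fun i hi => (hf i hi).intW) (ae_of_all _ (barronIntegrand_sum_le t F))
  repr x := by
    push_cast
    rw [Finset.sum_congr rfl fun i hi => (hf i hi).repr x,
      ← integral_finsetSum t fun i hi => integrable_mul_cexp_inner (hf i hi).intF x]
    simp only [Finset.sum_mul]

lemma mul (hs : 0 ≤ s) (hf : BarronRep d s f F) (hh : BarronRep d s h H) :
    BarronRep d s (fun x => f x * h x) (F ⋆[ContinuousLinearMap.mul ℂ ℂ] H) where
  intF := hf.intF.integrable_convolution _ hh.intF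
  intW := integrable_barronIntegrand_convolution hs hf.intF hf.intW hh.intF hh.intW
  repr x := by
    rw [integral_mul_cexp_inner_eq_fourier, Real.fourier_mul_convolution_eq hf.intF hh.intF,
      ← hf.eq_fourier, ← hh.eq_fourier]
    push_cast
    rfl

lemma barronNorm_convolution_le (hs : 0 ≤ s) (hf : BarronRep d s f F) (hh : BarronRep d s h H) :
    barronNorm d s (F ⋆[ContinuousLinearMap.mul ℂ ℂ] H) ≤ barronNorm d s F * barronNorm d s H :=
  integral_barronIntegrand_convolution_le hs hf.intW hh.intW

lemma pd (hs : 0 ≤ s) (hf : BarronRep d (s + 1) f F) (k : Fin d) :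
    BarronRep d s (pd d f k) (fun ξ => I * ξ k * F ξ) := by
  have hF := hf.intF.aestronglyMeasurable
  have hFk : AEStronglyMeasurable (fun ξ : Ed d => I * ξ k * F ξ) := by fun_prop
  refine ⟨hf.intW.mono' hFk (ae_of_all _ fun ξ => ?_),
    integrable_barronIntegrand_of_le hFk hf.intW (ae_of_all _ (barronIntegrand_I_mul_coord_le k F)),
    fun x => ?_⟩
  · exact (norm_le_barronIntegrand hs _ ξ).trans (barronIntegrand_I_mul_coord_le k F ξ)
  have hF' : Integrable fun ξ : Ed d => ‖ξ‖ * ‖F ξ‖ := by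
    refine hf.intW.mono' (by fun_prop) (ae_of_all _ fun ξ => ?_)
    rw [norm_mul, norm_norm, norm_norm, mul_comm]
    gcongr
    exact norm_le_one_add_norm_rpow hs ξ
  rw [_root_.pd, fderiv_apply_eq_integral_mul_cexp_inner hf.intF hF' hf.repr]
  simp [EuclideanSpace.inner_single_right]

end BarronRep

lemma barronNorm_const_mul_sum_mul_sum_le {ι κ : Type*} [Fintype ι] [Fintype κ] (c : ℝ)
    (a : ι → ℝ) {f : κ → ι → Ed d → ℝ} {F : κ → ι → Ed d → ℂ}
    (hF : ∀ k j, BarronRep d s (f k j) (F k j)) :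
    barronNorm d s (fun ξ => (c : ℂ) * ∑ j, (a j : ℂ) * ∑ k, F k j ξ) ≤
      |c| * ((⨆ j, |a j|) * ∑ j, ∑ k, barronNorm d s (F k j)) := by
  rw [barronNorm_const_mul, norm_real, Real.norm_eq_abs]
  gcongr
  calc _ ≤ ∑ j, |a j| * barronNorm d s (fun ξ => ∑ k, F k j ξ) :=
        barronNorm_sum_mul_le _ _ fun j _ => (BarronRep.sum _ fun k _ => hF k j).intW
    _ ≤ ∑ j, |a j| * ∑ k, barronNorm d s (F k j) := by
        gcongr with j
        exact barronNorm_sum_le _ fun k _ => (hF k j).intW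
    _ ≤ _ := sum_abs_mul_le_iSup_abs_mul_sum _ _
        fun j => Finset.sum_nonneg fun k _ => barronNorm_nonneg _

end Barron

theorem feedback_control_barron_general (d m : ℕ) (s : ℝ) (hs : 0 ≤ s)
    (R : Matrix (Fin m) (Fin m) ℝ)
    (g : Fin d → Fin m → Ed d → ℝ) (G : Fin d → Fin m → Ed d → ℂ)
    (hg : ∀ k j, BarronRep d s (g k j) (G k j))
    (V : Ed d → ℝ) (FV : Ed d → ℂ) (hV : BarronRep d (s + 1) V FV) :
    ∃ U : Fin m → Ed d → ℂ,
      (∀ i, BarronRep d s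
        (fun x => -(1 / 2) * ∑ j, R⁻¹ i j * ∑ k, g k j x * pd d V k x) (U i)) ∧
      (∑ i, barronNorm d s (U i)) ≤
        ((1 / 2) * ∑ i : Fin m, ⨆ j, |R⁻¹ i j|) * (∑ k, ∑ j, barronNorm d s (G k j))
          * barronNorm d (s + 1) FV := by
  set P : Fin d → Fin m → Ed d → ℂ := fun k j => G k j ⋆[mul ℂ ℂ] fun ξ => I * ξ k * FV ξ
  have hP k j : BarronRep d s (fun x => g k j x * pd d V k x) (P k j) :=
    (hg k j).mul hs (hV.pd hs k)
  have hPnorm : ∑ j, ∑ k, barronNorm d s (P k j) ≤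
      (∑ k, ∑ j, barronNorm d s (G k j)) * barronNorm d (s + 1) FV := by
    rw [Finset.sum_comm]
    simp only [Finset.sum_mul]
    gcongr with k _ j _
    exact ((hg k j).barronNorm_convolution_le hs (hV.pd hs k)).trans
      (mul_le_mul_of_nonneg_left (barronNorm_I_mul_coord_le hV.intW k) (barronNorm_nonneg _))
  refine ⟨fun i ξ => ((-(1 / 2) : ℝ) : ℂ) * ∑ j, (R⁻¹ i j : ℂ) * ∑ k, P k j ξ,
    fun i => (BarronRep.sum _ fun j _ =>
      (BarronRep.sum _ fun k _ => hP k j).const_mul _).const_mul _, ?_⟩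
  calc _ ≤ ∑ i, |-(1 / 2 : ℝ)| * ((⨆ j, |R⁻¹ i j|) * ∑ j, ∑ k, barronNorm d s (P k j)) :=
        Finset.sum_le_sum fun i _ => barronNorm_const_mul_sum_mul_sum_le _ _ hP
    _ ≤ ∑ i, |-(1 / 2 : ℝ)| * ((⨆ j, |R⁻¹ i j|) *
          ((∑ k, ∑ j, barronNorm d s (G k j)) * barronNorm d (s + 1) FV)) := by
        gcongr with i
        exact Real.iSup_nonneg fun j => abs_nonneg _
    _ = _ := by
        rw [← Finset.mul_sum, ← Finset.sum_mul, abs_neg, abs_of_pos one_half_pos]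
        ring

/-- for `s ≥ 0`, a symmetric positive definite `R ∈ ℝ^{m×m}`, a matrix field `g`
with entries in `B^s(ℝ^d)` and `V ∈ B^{s+1}(ℝ^d)`, the feedback control
`u = -(1/2) R⁻¹ gᵀ ∇V` has components in `B^s(ℝ^d)` and
`‖u‖_{B^s} ≤ C_{R,2} ‖g‖_{B^s} ‖V‖_{B^{s+1}}` with `C_{R,2} = (1/2) Σᵢ maxⱼ |(R⁻¹)ᵢⱼ|`. -/
theorem feedback_control_barron (d m : ℕ) (hm : 0 < m) (s : ℝ) (hs : 0 ≤ s)
    (R : Matrix (Fin m) (Fin m) ℝ) (hR : R.PosDef)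
    (g : Fin d → Fin m → Ed d → ℝ) (G : Fin d → Fin m → Ed d → ℂ)
    (hg : ∀ k j, BarronRep d s (g k j) (G k j))
    (V : Ed d → ℝ) (FV : Ed d → ℂ) (hV : BarronRep d (s + 1) V FV) :
    ∃ U : Fin m → Ed d → ℂ,
      (∀ i, BarronRep d s
        (fun x => -(1 / 2) * ∑ j, R⁻¹ i j * ∑ k, g k j x * pd d V k x) (U i)) ∧
      (∑ i, barronNorm d s (U i)) ≤
        ((1 / 2) * ∑ i : Fin m, ⨆ j, |R⁻¹ i j|) * (∑ k, ∑ j, barronNorm d s (G k j))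
          * barronNorm d (s + 1) FV :=
  feedback_control_barron_general d m s hs R g G hg V FV hV
end
end
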